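/- arXiv:1302.4278 — 2 statements merged into one kernel-verified Lean document; each statement's English description precedes it below -/
import Mathlib

section
/- Let α, β ∈ C[0,1] with α(t) < β(t) for all t. The first exit time functional π : D[0,1] → [0,1] is continuous at every x ∈ C_1 ∪ C_2 ∪ C_3 with respect to the Skorohod topology: if x ∈ C_1 ∪ C_2 ∪ C_3 and x_n → x in the Skorohod topology, then π(x_n) → π(x). -/
open Set Filter

/-- A function `x : ℝ → ℝ` is RCLL (càdlàg) on `[0,1]`. -/
def RCLL (x : ℝ → ℝ) : Prop :=
  (∀ t ∈ Set.Ico (0:ℝ) 1,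
      Filter.Tendsto x (nhdsWithin t (Set.Ioc t 1)) (nhds (x t))) ∧
  (∀ t ∈ Set.Ioc (0:ℝ) 1,
      ∃ L : ℝ, Filter.Tendsto x (nhdsWithin t (Set.Ico 0 t)) (nhds L))

/-- The uniform "norm" of a function over `[0,1]`. -/
noncomputable def unifNorm (f : ℝ → ℝ) : ℝ :=
  sSup ((fun t => |f t|) '' Set.Icc 0 1)

/-- Membership in `Λ`. -/
def MemLambda (l : ℝ → ℝ) : Prop :=
  ContinuousOn l (Set.Icc 0 1) ∧ StrictMonoOn l (Set.Icc 0 1) ∧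
    Set.BijOn l (Set.Icc 0 1) (Set.Icc 0 1) ∧ l 0 = 0 ∧ l 1 = 1

/-- Skorohod convergence of a sequence `x_n → x` in `D[0,1]`. -/
def SkorohodTendsto (xn : ℕ → ℝ → ℝ) (x : ℝ → ℝ) : Prop :=
  ∃ l : ℕ → ℝ → ℝ, (∀ n, MemLambda (l n)) ∧
    Filter.Tendsto (fun n => unifNorm (fun t => l n t - t)) Filter.atTop (nhds 0) ∧
    Filter.Tendsto (fun n => unifNorm (fun t => xn n t - x (l n t))) Filter.atTop (nhds 0)

/-- The first exit time `π(x) = inf{ t ∈ [0,1] : x(t) ∉ (α(t), β(t)) } ∧ 1`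
(with the convention `inf ∅ = +∞`, realized by adjoining `{1}` before taking
the infimum, since the exit set is contained in `[0,1]`). -/
noncomputable def exitTime (a b x : ℝ → ℝ) : ℝ :=
  sInf ({t ∈ Set.Icc (0:ℝ) 1 | x t ≤ a t ∨ b t ≤ x t} ∪ {1})


/-- Membership in `C_1`. -/
def MemC1 (a b x : ℝ → ℝ) : Prop :=
  ContinuousOn x (Set.Icc 0 1) ∧ exitTime a b x < 1 ∧
    x (exitTime a b x) = b (exitTime a b x) ∧
    sInf ({t | exitTime a b x < t ∧ t ≤ 1 ∧ b t < x t} ∪ {1}) = exitTime a b x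

/-- Membership in `C_2`. -/
def MemC2 (a b x : ℝ → ℝ) : Prop :=
  ContinuousOn x (Set.Icc 0 1) ∧ exitTime a b x < 1 ∧
    x (exitTime a b x) = a (exitTime a b x) ∧
    sInf ({t | exitTime a b x < t ∧ t ≤ 1 ∧ x t < a t} ∪ {1}) = exitTime a b x

/-- Membership in `C_3`. -/
def MemC3 (a b x : ℝ → ℝ) : Prop :=
  ContinuousOn x (Set.Icc 0 1) ∧ exitTime a b x = 1

lemma rcll_bdd {f : ℝ → ℝ} (hf : RCLL f) : ∃ M, ∀ t ∈ Set.Icc (0:ℝ) 1, |f t| ≤ M := by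
  have hloc : ∀ t : ℝ, ∃ V : Set ℝ, ∃ M : ℝ, t ∈ Set.Icc (0:ℝ) 1 →
      V ∈ nhds t ∧ ∀ u ∈ V ∩ Set.Icc (0:ℝ) 1, |f u| ≤ M := by
    intro t
    by_cases ht : t ∈ Set.Icc (0:ℝ) 1
    swap
    · exact ⟨∅, 0, fun h => absurd h ht⟩
    obtain ⟨VR, hVR, MR, hMR⟩ : ∃ V ∈ nhds t, ∃ M, ∀ u ∈ V ∩ Set.Ioc t 1, |f u| ≤ M := by
      rcases eq_or_lt_of_le ht.2 with h1 | h1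
      · exact ⟨Set.univ, univ_mem, 0, fun u hu => False.elim (by
          rw [← h1] at hu; exact absurd hu.2.2 (not_le.mpr hu.2.1))⟩
      · have h := hf.1 t ⟨ht.1, h1⟩
        have h2 : f ⁻¹' Metric.closedBall (f t) 1 ∈ nhdsWithin t (Set.Ioc t 1) :=
          h (Metric.closedBall_mem_nhds (f t) one_pos)
        rw [mem_nhdsWithin] at h2
        obtain ⟨V, hVo, htV, hVsub⟩ := h2
        refine ⟨V, hVo.mem_nhds htV, |f t| + 1, fun u hu => ?_⟩
        have h3 := hVsub ⟨hu.1, hu.2⟩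
        simp only [Set.mem_preimage, Metric.mem_closedBall, Real.dist_eq] at h3
        calc |f u| = |(f u - f t) + f t| := by ring_nf
          _ ≤ |f u - f t| + |f t| := abs_add_le _ _
          _ ≤ |f t| + 1 := by linarith
    obtain ⟨VL, hVL, ML, hML⟩ : ∃ V ∈ nhds t, ∃ M, ∀ u ∈ V ∩ Set.Ico 0 t, |f u| ≤ M := by
      rcases eq_or_lt_of_le ht.1 with h1 | h1
      · exact ⟨Set.univ, univ_mem, 0, fun u hu => False.elim (by
          rw [← h1] at hu; exact absurd hu.2.2 (not_lt.mpr hu.2.1))⟩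
      · obtain ⟨L, h⟩ := hf.2 t ⟨h1, ht.2⟩
        have h2 : f ⁻¹' Metric.closedBall L 1 ∈ nhdsWithin t (Set.Ico 0 t) :=
          h (Metric.closedBall_mem_nhds L one_pos)
        rw [mem_nhdsWithin] at h2
        obtain ⟨V, hVo, htV, hVsub⟩ := h2
        refine ⟨V, hVo.mem_nhds htV, |L| + 1, fun u hu => ?_⟩
        have h3 := hVsub ⟨hu.1, hu.2⟩
        simp only [Set.mem_preimage, Metric.mem_closedBall, Real.dist_eq] at h3
        calc |f u| = |(f u - L) + L| := by ring_nf
          _ ≤ |f u - L| + |L| := abs_add_le _ _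
          _ ≤ |L| + 1 := by linarith
    refine ⟨VR ∩ VL, max (max MR ML) (|f t|), fun _ => ⟨inter_mem hVR hVL, fun u hu => ?_⟩⟩
    rcases lt_trichotomy u t with h | h | h
    · exact le_trans (hML u ⟨hu.1.2, hu.2.1, h⟩) (le_max_of_le_left (le_max_right _ _))
    · rw [h]; exact le_max_right _ _
    · exact le_trans (hMR u ⟨hu.1.1, h, hu.2.2⟩) (le_max_of_le_left (le_max_left _ _))
  choose V M hVM using hloc
  obtain ⟨F, hFmem, hFcover⟩ := isCompact_Icc.elim_nhds_subcover V (fun t ht => (hVM t ht).1)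
  have hFne : F.Nonempty := by
    rcases Finset.eq_empty_or_nonempty F with h | h
    · exfalso
      have := hFcover (left_mem_Icc.mpr zero_le_one)
      simp [h] at this
    · exact h
  refine ⟨F.sup' hFne M, fun t ht => ?_⟩
  have h := hFcover ht
  simp only [Set.mem_iUnion, exists_prop] at h
  obtain ⟨s, hsF, htV⟩ := h
  exact le_trans ((hVM s (hFmem s hsF)).2 t ⟨htV, ht⟩) (Finset.le_sup' M hsF)

lemma unifNorm_bound {f : ℝ → ℝ} {M : ℝ} (hM : ∀ t ∈ Set.Icc (0:ℝ) 1, |f t| ≤ M)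
    {t : ℝ} (ht : t ∈ Set.Icc (0:ℝ) 1) : |f t| ≤ unifNorm f :=
  le_csSup ⟨M, by rintro y ⟨u, hu, rfl⟩; exact hM u hu⟩ ⟨t, ht, rfl⟩

lemma exit_bddBelow (a b y : ℝ → ℝ) :
    BddBelow ({t ∈ Set.Icc (0:ℝ) 1 | y t ≤ a t ∨ b t ≤ y t} ∪ {1}) := by
  refine ⟨0, ?_⟩
  rintro s (⟨hs, _⟩ | rfl)
  · exact hs.1
  · norm_num

lemma exitTime_nonneg (a b y : ℝ → ℝ) : 0 ≤ exitTime a b y := by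
  refine le_csInf ⟨1, Or.inr rfl⟩ ?_
  rintro s (⟨hs, _⟩ | rfl)
  · exact hs.1
  · norm_num

lemma exitTime_le_one (a b y : ℝ → ℝ) : exitTime a b y ≤ 1 :=
  csInf_le (exit_bddBelow a b y) (Or.inr rfl)

lemma exitTime_interior {a b y : ℝ → ℝ} {t : ℝ} (ht : t ∈ Set.Icc (0:ℝ) 1)
    (hlt : t < exitTime a b y) : a t < y t ∧ y t < b t := by
  by_contra h
  have hmem : t ∈ ({t ∈ Set.Icc (0:ℝ) 1 | y t ≤ a t ∨ b t ≤ y t} ∪ {1}) := by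
    left
    refine ⟨ht, ?_⟩
    by_contra h2
    push_neg at h2
    exact h ⟨h2.1, h2.2⟩
  exact absurd (csInf_le (exit_bddBelow a b y) hmem) (not_le.mpr hlt)

/-- For continuous barriers `α < β`, the first exit time functional `π` is
continuous with respect to the Skorohod topology at every
`x ∈ C_1 ∪ C_2 ∪ C_3`: if `x_n → x` in the Skorohod topology then
`π(x_n) → π(x)`. -/
theorem exitTime_continuousAt (a b : ℝ → ℝ)
    (ha : ContinuousOn a (Set.Icc 0 1)) (hb : ContinuousOn b (Set.Icc 0 1))
    (hab : ∀ t ∈ Set.Icc (0:ℝ) 1, a t < b t)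
    (x : ℝ → ℝ) (hx : MemC1 a b x ∨ MemC2 a b x ∨ MemC3 a b x)
    (xn : ℕ → ℝ → ℝ) (hxn : ∀ n, RCLL (xn n))
    (hconv : SkorohodTendsto xn x) :
    Filter.Tendsto (fun n => exitTime a b (xn n)) Filter.atTop
      (nhds (exitTime a b x)) := by
  set τ := exitTime a b x with hτdef
  have hτ0 : 0 ≤ τ := exitTime_nonneg a b x
  have hτ1 : τ ≤ 1 := exitTime_le_one a b x
  have hcont : ContinuousOn x (Set.Icc 0 1) := by
    rcases hx with h | h | h <;> exact h.1
  obtain ⟨l, hl, hlconv, hxconv⟩ := hconv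
  -- uniform continuity of x
  have hxuc : ∀ ε > 0, ∃ δ > 0, ∀ s ∈ Set.Icc (0:ℝ) 1, ∀ t ∈ Set.Icc (0:ℝ) 1,
      |s - t| < δ → |x s - x t| < ε := by
    have h := isCompact_Icc.uniformContinuousOn_of_continuous hcont
    rw [Metric.uniformContinuousOn_iff] at h
    intro ε hε
    obtain ⟨δ, hδ, hδ2⟩ := h ε hε
    exact ⟨δ, hδ, fun s hs t ht hd => by
      have := hδ2 s hs t ht (by rwa [Real.dist_eq]); rwa [Real.dist_eq] at this⟩
  obtain ⟨C, hC⟩ : ∃ C, ∀ t ∈ Set.Icc (0:ℝ) 1, |x t| ≤ C :=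
    isCompact_Icc.exists_bound_of_continuousOn hcont
  -- uniform convergence
  have key : ∀ ε > 0, ∀ᶠ n in atTop, ∀ t ∈ Set.Icc (0:ℝ) 1, |xn n t - x t| < ε := by
    intro ε hε
    obtain ⟨δ, hδ, hδx⟩ := hxuc (ε/2) (half_pos hε)
    filter_upwards [hlconv.eventually_lt_const hδ,
      hxconv.eventually_lt_const (half_pos hε)] with n h1n h2n
    intro t ht
    have hmap : ∀ u ∈ Set.Icc (0:ℝ) 1, l n u ∈ Set.Icc (0:ℝ) 1 := (hl n).2.2.1.mapsTo
    have hmem := hmap t ht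
    have hb1 : |l n t - t| ≤ unifNorm (fun u => l n u - u) := by
      refine unifNorm_bound (f := fun u => l n u - u) (M := 1) (fun u hu => ?_) ht
      have h2 := hmap u hu
      have h3 : -1 ≤ l n u - u ∧ l n u - u ≤ 1 :=
        ⟨by linarith [h2.1, hu.2], by linarith [h2.2, hu.1]⟩
      rw [abs_le]
      exact h3
    have hb2 : |xn n t - x (l n t)| ≤ unifNorm (fun u => xn n u - x (l n u)) := by
      obtain ⟨Mn, hMn⟩ := rcll_bdd (hxn n)
      refine unifNorm_bound (f := fun u => xn n u - x (l n u)) (M := Mn + C) (fun u hu => ?_) ht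
      calc |xn n u - x (l n u)| ≤ |xn n u| + |x (l n u)| := abs_sub _ _
        _ ≤ Mn + C := add_le_add (hMn u hu) (hC _ (hmap u hu))
    have h3 : |x (l n t) - x t| < ε/2 := hδx _ hmem _ ht (lt_of_le_of_lt hb1 h1n)
    calc |xn n t - x t| = |(xn n t - x (l n t)) + (x (l n t) - x t)| := by ring_nf
      _ ≤ |xn n t - x (l n t)| + |x (l n t) - x t| := abs_add_le _ _
      _ < ε/2 + ε/2 := add_lt_add (lt_of_le_of_lt hb2 h2n) h3
      _ = ε := add_halves ε
  -- lower bound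
  have lower : ∀ ε > 0, ∀ᶠ n in atTop, τ - ε ≤ exitTime a b (xn n) := by
    intro ε hε
    rcases le_or_gt (τ - ε) 0 with h0 | h0
    · exact Eventually.of_forall fun n => le_trans h0 (exitTime_nonneg a b (xn n))
    · have hKsub : Set.Icc (0:ℝ) (τ - ε) ⊆ Set.Icc (0:ℝ) 1 :=
        Set.Icc_subset_Icc le_rfl (by linarith)
      have hg : ContinuousOn (fun t => min (x t - a t) (b t - x t)) (Set.Icc 0 (τ - ε)) :=
        (((hcont.sub ha).inf (hb.sub hcont))).mono hKsub
      obtain ⟨t₀, ht₀K, ht₀min⟩ :=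
        isCompact_Icc.exists_isMinOn ⟨0, Set.left_mem_Icc.mpr h0.le⟩ hg
      have ht₀I : t₀ ∈ Set.Icc (0:ℝ) 1 := hKsub ht₀K
      have ht₀lt : t₀ < τ := lt_of_le_of_lt ht₀K.2 (by linarith)
      obtain ⟨hi1, hi2⟩ := exitTime_interior ht₀I ht₀lt
      set δ := min (x t₀ - a t₀) (b t₀ - x t₀) with hδdef
      have hδpos : 0 < δ := lt_min (by linarith) (by linarith)
      filter_upwards [key δ hδpos] with n hn
      refine le_csInf ⟨1, Or.inr rfl⟩ ?_
      rintro s (⟨hs1, hs2⟩ | rfl)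
      · by_contra hlt
        push_neg at hlt
        have hsK : s ∈ Set.Icc (0:ℝ) (τ - ε) := ⟨hs1.1, hlt.le⟩
        have h1 := hn s (hKsub hsK)
        have h2 : δ ≤ min (x s - a s) (b s - x s) := isMinOn_iff.mp ht₀min s hsK
        rw [abs_lt] at h1
        have h3 : δ ≤ x s - a s := le_trans h2 (min_le_left _ _)
        have h4 : δ ≤ b s - x s := le_trans h2 (min_le_right _ _)
        rcases hs2 with h | h <;> linarith
      · linarith
  -- upper bound
  have hupper : ∀ ε > 0, ∀ᶠ n in atTop, exitTime a b (xn n) < τ + ε := by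
    rcases hx with ⟨_, hτlt, _, hS⟩ | ⟨_, hτlt, _, hS⟩ | ⟨_, hτeq⟩
    · intro ε hε
      have hcτ : τ < min (τ + ε) ((τ + 1)/2) := lt_min (by linarith) (by linarith)
      have hc1 : min (τ + ε) ((τ + 1)/2) < 1 := lt_of_le_of_lt (min_le_right _ _) (by linarith)
      obtain ⟨s, hs, hsc⟩ := exists_lt_of_csInf_lt (s := {t | τ < t ∧ t ≤ 1 ∧ b t < x t} ∪ {1})
        ⟨1, Or.inr rfl⟩ (by rw [hS]; exact hcτ)
      rcases hs with ⟨hs1, hs2, hs3⟩ | rfl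
      · have hsI : s ∈ Set.Icc (0:ℝ) 1 := ⟨le_trans hτ0 hs1.le, hs2⟩
        filter_upwards [key (x s - b s) (by linarith)] with n hn
        have h := hn s hsI
        rw [abs_lt] at h
        have hmem : s ∈ ({t ∈ Set.Icc (0:ℝ) 1 | xn n t ≤ a t ∨ b t ≤ xn n t} ∪ {1}) :=
          Or.inl ⟨hsI, Or.inr (by linarith)⟩
        calc exitTime a b (xn n) ≤ s := csInf_le (exit_bddBelow a b (xn n)) hmem
          _ < min (τ + ε) ((τ + 1)/2) := hsc
          _ ≤ τ + ε := min_le_left _ _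
      · exact absurd hsc (by linarith)
    · intro ε hε
      have hcτ : τ < min (τ + ε) ((τ + 1)/2) := lt_min (by linarith) (by linarith)
      have hc1 : min (τ + ε) ((τ + 1)/2) < 1 := lt_of_le_of_lt (min_le_right _ _) (by linarith)
      obtain ⟨s, hs, hsc⟩ := exists_lt_of_csInf_lt (s := {t | τ < t ∧ t ≤ 1 ∧ x t < a t} ∪ {1})
        ⟨1, Or.inr rfl⟩ (by rw [hS]; exact hcτ)
      rcases hs with ⟨hs1, hs2, hs3⟩ | rfl
      · have hsI : s ∈ Set.Icc (0:ℝ) 1 := ⟨le_trans hτ0 hs1.le, hs2⟩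
        filter_upwards [key (a s - x s) (by linarith)] with n hn
        have h := hn s hsI
        rw [abs_lt] at h
        have hmem : s ∈ ({t ∈ Set.Icc (0:ℝ) 1 | xn n t ≤ a t ∨ b t ≤ xn n t} ∪ {1}) :=
          Or.inl ⟨hsI, Or.inl (by linarith)⟩
        calc exitTime a b (xn n) ≤ s := csInf_le (exit_bddBelow a b (xn n)) hmem
          _ < min (τ + ε) ((τ + 1)/2) := hsc
          _ ≤ τ + ε := min_le_left _ _
      · exact absurd hsc (by linarith)
    · intro ε hε
      exact Eventually.of_forall fun n =>
        lt_of_le_of_lt (exitTime_le_one a b (xn n)) (by rw [← hτeq] at *; linarith)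
  -- conclusion
  rw [Metric.tendsto_nhds]
  intro ε hε
  filter_upwards [lower (ε/2) (half_pos hε), hupper ε hε] with n h1 h2
  rw [Real.dist_eq, abs_lt]
  constructor <;> linarith
end

section
/- Fix m ∈ ℕ, vectors ν^{(1)}, ν^{(2)}, ν^{(3)}, ν^{(4)} ∈ [0,1]^m, continuous barriers α, β ∈ C[0,1] with α(t) < β(t) for all t, and define G(x) = g( Π(x, π(x)·ν^{(1)}), Π(x, ν^{(2)}), Π(x*, π(x)·ν^{(3)}), Π(x*, ν^{(4)}), π(x) ) for x ∈ D[0,1], where g : ℝ^{4m+1} → ℝ. If x ∈ C_1 ∪ C_2 ∪ C_3 and g is continuous at the point ( Π(x, π(x)·ν^{(1)}), Π(x, ν^{(2)}), Π(x*, π(x)·ν^{(3)}), Π(x*, ν^{(4)}), π(x) ), then for every sequence (x_n) in D[0,1] converging to x in the Skorohod topology, G(x_n) → G(x). -/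
open Set Filter

/-- The running maximum `x*` of `x`. -/
noncomputable def runMax (x : ℝ → ℝ) : ℝ → ℝ :=
  fun t => sSup (x '' Set.Icc 0 t)

/-- The projection operator `Π(x, ν) = (x(ν_1), …, x(ν_m))`. -/
def proj (m : ℕ) (x : ℝ → ℝ) (ν : Fin m → ℝ) : Fin m → ℝ := fun i => x (ν i)

/-- The argument
`Z(x) = ( Π(x, π(x)·ν¹), Π(x, ν²), Π(x*, π(x)·ν³), Π(x*, ν⁴), π(x) )`. -/
noncomputable def argZ (m : ℕ) (a b : ℝ → ℝ) (ν1 ν2 ν3 ν4 : Fin m → ℝ)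
    (x : ℝ → ℝ) :
    (Fin m → ℝ) × (Fin m → ℝ) × (Fin m → ℝ) × (Fin m → ℝ) × ℝ :=
  (proj m x (fun i => exitTime a b x * ν1 i), proj m x ν2,
    proj m (runMax x) (fun i => exitTime a b x * ν3 i), proj m (runMax x) ν4,
    exitTime a b x)

/-! Skorohod convergence to a continuous limit is uniform convergence on `[0,1]`; this needs the
càdlàg paths to be bounded, since `unifNorm` is an `sSup` and so is `0` on unbounded functions.
Uniform convergence moves running maxima uniformly, and it moves the exit time continuously at
`x ∈ C₁ ∪ C₂ ∪ C₃`: before `π(x)` the path stays a positive distance inside the barriers, so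
`π(xₙ)` cannot come much earlier, and on `C₁ ∪ C₂` the path is strictly outside a barrier at
times arbitrarily soon after `π(x)`, so `π(xₙ)` cannot come much later. Every coordinate of the
argument of `g` is then a uniformly convergent sequence of functions with continuous limit,
evaluated at convergent times. -/

theorem Filter.Tendsto.exists_mem_isBounded_image {α β : Type*} [PseudoMetricSpace β]
    {l : Filter α} {f : α → β} {L : β} (h : Tendsto f l (nhds L)) :
    ∃ u ∈ l, Bornology.IsBounded (f '' u) :=
  ⟨f ⁻¹' Metric.ball L 1, h (Metric.ball_mem_nhds L one_pos),
    Metric.isBounded_ball.subset (image_preimage_subset f _)⟩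

theorem RCLL.isBounded_image {f : ℝ → ℝ} (hf : RCLL f) :
    Bornology.IsBounded (f '' Icc 0 1) := by
  refine isCompact_Icc.induction_on (p := fun s => Bornology.IsBounded (f '' s)) (by simp)
    (fun s t hst ht => ht.subset (image_mono hst))
    (fun s t hs ht => by rw [image_union]; exact hs.union ht) fun t ht => ?_
  have hleft : ∃ u ∈ nhdsWithin t (Ico 0 t), Bornology.IsBounded (f '' u) := by
    rcases ht.1.eq_or_lt with rfl | ht0
    · exact ⟨∅, by simp, by simp⟩
    · obtain ⟨L, hL⟩ := hf.2 t ⟨ht0, ht.2⟩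
      exact hL.exists_mem_isBounded_image
  have hright : ∃ u ∈ nhdsWithin t (Ioc t 1), Bornology.IsBounded (f '' u) := by
    rcases ht.2.eq_or_lt with rfl | ht1
    · exact ⟨∅, by simp, by simp⟩
    · exact (hf.1 t ⟨ht.1, ht1⟩).exists_mem_isBounded_image
  obtain ⟨u, hu, hfu⟩ := hleft
  obtain ⟨v, hv, hfv⟩ := hright
  have hsplit : Icc 0 1 ⊆ insert t (Ico 0 t ∪ Ioc t 1) := fun s hs => by
    rcases lt_trichotomy s t with h | h | h
    exacts [Or.inr (Or.inl ⟨hs.1, h⟩), Or.inl h, Or.inr (Or.inr ⟨h, hs.2⟩)]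
  refine ⟨insert t (u ∪ v), nhdsWithin_mono t hsplit (mem_nhdsWithin_insert.2
    ⟨mem_insert t _, mem_of_superset ?_ (subset_insert t _)⟩), ?_⟩
  · rw [nhdsWithin_union]
    exact ⟨mem_of_superset hu subset_union_left, mem_of_superset hv subset_union_right⟩
  · rw [image_insert_eq, image_union]
    exact (hfu.union hfv).insert _

theorem abs_le_unifNorm {f : ℝ → ℝ} {C : ℝ} (hC : ∀ t ∈ Icc (0 : ℝ) 1, |f t| ≤ C) {t : ℝ}
    (ht : t ∈ Icc (0 : ℝ) 1) : |f t| ≤ unifNorm f :=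
  le_csSup ⟨C, forall_mem_image.2 hC⟩ (mem_image_of_mem _ ht)

theorem SkorohodTendsto.tendstoUniformlyOn {xn : ℕ → ℝ → ℝ} {x : ℝ → ℝ}
    (h : SkorohodTendsto xn x) (hx : ContinuousOn x (Icc 0 1))
    (hxn : ∀ n, Bornology.IsBounded (xn n '' Icc 0 1)) :
    TendstoUniformlyOn xn x atTop (Icc 0 1) := by
  obtain ⟨l, hl, hl_id, hxn_xl⟩ := h
  obtain ⟨Cx, hCx⟩ := isCompact_Icc.exists_bound_of_continuousOn hx
  rw [Metric.tendstoUniformlyOn_iff]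
  intro ε hε
  obtain ⟨δ, hδ, hxδ⟩ := Metric.uniformContinuousOn_iff.1
    (isCompact_Icc.uniformContinuousOn_of_continuous hx) (ε / 2) (half_pos hε)
  filter_upwards [hl_id.eventually (gt_mem_nhds hδ),
    hxn_xl.eventually (gt_mem_nhds (half_pos hε))] with n hn_id hn_xl t ht
  have hlt : l n t ∈ Icc (0 : ℝ) 1 := (hl n).2.2.1.mapsTo ht
  obtain ⟨C, hC⟩ := isBounded_iff_forall_norm_le.1 (hxn n)
  have h_shift : |l n t - t| < δ := by
    refine (abs_le_unifNorm (f := fun t => l n t - t) (C := 1) (fun s hs => ?_) ht).trans_lt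
      hn_id
    have hls := (hl n).2.2.1.mapsTo hs
    exact abs_sub_le_of_nonneg_of_le hls.1 hls.2 hs.1 hs.2
  have h_jump : |xn n t - x (l n t)| < ε / 2 := by
    refine (abs_le_unifNorm (f := fun t => xn n t - x (l n t)) (C := C + Cx) (fun s hs => ?_)
      ht).trans_lt hn_xl
    exact (abs_sub _ _).trans (add_le_add (hC _ (mem_image_of_mem _ hs))
      (hCx _ ((hl n).2.2.1.mapsTo hs)))
  have h_cont : |x (l n t) - x t| < ε / 2 := hxδ _ hlt _ ht h_shift
  rw [dist_comm, Real.dist_eq]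
  calc |xn n t - x t| ≤ |xn n t - x (l n t)| + |x (l n t) - x t| := abs_sub_le _ _ _
    _ < ε := by linarith

theorem abs_sSup_image_sub_sSup_image_le {α : Type*} {s : Set α} (hs : s.Nonempty)
    {f g : α → ℝ} (hg : BddAbove (g '' s)) {c : ℝ} (h : ∀ y ∈ s, |f y - g y| ≤ c) :
    |sSup (f '' s) - sSup (g '' s)| ≤ c := by
  have key : ∀ {u v : α → ℝ}, BddAbove (v '' s) → (∀ y ∈ s, u y ≤ v y + c) →
      sSup (u '' s) ≤ sSup (v '' s) + c := fun hv huv =>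
    csSup_le (hs.image _) (forall_mem_image.2 fun y hy =>
      (huv y hy).trans (add_le_add_left (le_csSup hv (mem_image_of_mem _ hy)) c))
  obtain ⟨M, hM⟩ := hg
  have hf : BddAbove (f '' s) := ⟨M + c, forall_mem_image.2 fun y hy => by
    linarith [hM (mem_image_of_mem g hy), (abs_le.1 (h y hy)).2]⟩
  rw [abs_sub_le_iff]
  exact ⟨sub_le_iff_le_add'.2 (key (u := f) ⟨M, hM⟩ fun y hy => by
      linarith [(abs_le.1 (h y hy)).2]),
    sub_le_iff_le_add'.2 (key (u := g) hf fun y hy => by linarith [(abs_le.1 (h y hy)).1])⟩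

theorem TendstoUniformlyOn.runMax {ι : Type*} {l : Filter ι} {F : ι → ℝ → ℝ} {f : ℝ → ℝ}
    (h : TendstoUniformlyOn F f l (Icc 0 1)) (hf : BddAbove (f '' Icc 0 1)) :
    TendstoUniformlyOn (fun n => runMax (F n)) (runMax f) l (Icc 0 1) := by
  rw [Metric.tendstoUniformlyOn_iff] at h ⊢
  intro ε hε
  filter_upwards [h (ε / 2) (half_pos hε)] with n hn t ht
  have hsub : Icc 0 t ⊆ Icc (0 : ℝ) 1 := Icc_subset_Icc_right ht.2
  rw [dist_comm, Real.dist_eq]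
  refine (abs_sSup_image_sub_sSup_image_le (nonempty_Icc.2 ht.1) (hf.mono (image_mono hsub))
    fun s hs => ?_).trans_lt (half_lt_self hε)
  rw [← Real.dist_eq, dist_comm]
  exact (hn s (hsub hs)).le

theorem ContinuousOn.runMax {x : ℝ → ℝ} (hx : ContinuousOn x (Icc 0 1)) :
    ContinuousOn (runMax x) (Icc 0 1) := by
  -- `runMax x t` is the supremum over the fixed compact `[0,1]` of `s ↦ x (min s t)`, which is
  -- jointly continuous once `x` is extended off `[0,1]` by clamping.
  set clamp : ℝ → ℝ := fun s => projIcc 0 1 zero_le_one s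
  have hclamp : Continuous ↿fun t s => x (clamp (min s t)) :=
    hx.comp_continuous (continuous_subtype_val.comp (continuous_projIcc.comp (by fun_prop)))
      fun _ => Subtype.prop _
  refine ((isCompact_Icc (a := (0 : ℝ)) (b := 1)).continuous_sSup hclamp).continuousOn.congr
    fun t ht => ?_
  have hclamp_eq : ∀ s ∈ Icc (0 : ℝ) 1, clamp (min s t) = min s t := fun s hs =>
    congrArg Subtype.val (projIcc_of_mem zero_le_one
      ⟨le_min hs.1 ht.1, (min_le_right s t).trans ht.2⟩)
  change sSup (x '' Icc 0 t) = _
  congr 1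
  ext y
  constructor
  · rintro ⟨s, hs, rfl⟩
    refine ⟨s, ⟨hs.1, hs.2.trans ht.2⟩, ?_⟩
    change x (clamp (min s t)) = x s
    rw [hclamp_eq s ⟨hs.1, hs.2.trans ht.2⟩, min_eq_left hs.2]
  · rintro ⟨s, hs, rfl⟩
    exact ⟨min s t, ⟨le_min hs.1 ht.1, min_le_right s t⟩, (hclamp_eq s hs).symm ▸ rfl⟩

theorem tendsto_proj {m : ℕ} {ι : Type*} {l : Filter ι} {F : ι → ℝ → ℝ} {f : ℝ → ℝ}
    {s : Set ℝ} (hF : TendstoUniformlyOn F f l s) (hf : ContinuousOn f s)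
    {ν : ι → Fin m → ℝ} {ν₀ : Fin m → ℝ} (hν₀ : ∀ i, ν₀ i ∈ s)
    (hν : ∀ i, Tendsto (fun n => ν n i) l (nhdsWithin (ν₀ i) s)) :
    Tendsto (fun n => proj m (F n) (ν n)) l (nhds (proj m f ν₀)) :=
  tendsto_pi_nhds.2 fun i => hF.tendsto_comp (hf _ (hν₀ i)) (hν i)

section exitTime

variable {a b x : ℝ → ℝ}

theorem bddBelow_exitSet (a b x : ℝ → ℝ) :
    BddBelow ({t ∈ Icc (0 : ℝ) 1 | x t ≤ a t ∨ b t ≤ x t} ∪ {1}) :=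
  ⟨0, by rintro t (⟨ht, -⟩ | rfl) <;> simp_all⟩

theorem exitTime_mem (a b x : ℝ → ℝ) : exitTime a b x ∈ Icc (0 : ℝ) 1 :=
  ⟨le_csInf ⟨1, Or.inr rfl⟩ (by rintro t (⟨ht, -⟩ | rfl) <;> simp_all),
    csInf_le (bddBelow_exitSet a b x) (Or.inr rfl)⟩

theorem exitTime_le {t : ℝ} (ht : t ∈ Icc (0 : ℝ) 1) (h : x t ≤ a t ∨ b t ≤ x t) :
    exitTime a b x ≤ t :=
  csInf_le (bddBelow_exitSet a b x) (Or.inl ⟨ht, h⟩)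

theorem le_exitTime {s : ℝ} (hs : s ≤ 1) (h : ∀ t ∈ Icc 0 s, a t < x t ∧ x t < b t) :
    s ≤ exitTime a b x := by
  refine le_csInf ⟨1, Or.inr rfl⟩ ?_
  rintro t (⟨ht, hout⟩ | rfl)
  · by_contra! hts
    have := h t ⟨ht.1, hts.le⟩
    rcases hout with hout | hout <;> linarith
  · exact hs

theorem mem_barriers_of_lt_exitTime {t : ℝ} (ht : t ∈ Icc (0 : ℝ) 1) (h : t < exitTime a b x) :
    a t < x t ∧ x t < b t := by
  by_contra! hout
  exact (exitTime_le ht ((le_or_gt (x t) (a t)).imp_right hout)).not_gt h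

theorem eventually_lt_exitTime {ι : Type*} {l : Filter ι} {xn : ι → ℝ → ℝ}
    (ha : ContinuousOn a (Icc 0 1)) (hb : ContinuousOn b (Icc 0 1))
    (hx : ContinuousOn x (Icc 0 1)) (hU : TendstoUniformlyOn xn x l (Icc 0 1)) {s : ℝ}
    (hs : s < exitTime a b x) : ∀ᶠ n in l, s < exitTime a b (xn n) := by
  rcases lt_or_ge s 0 with hs0 | hs0
  · exact .of_forall fun n => hs0.trans_le (exitTime_mem a b (xn n)).1
  obtain ⟨r, hsr, hrτ⟩ := exists_between hs
  have hr1 : r ≤ 1 := hrτ.le.trans (exitTime_mem a b x).2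
  have hK : Icc 0 r ⊆ Icc (0 : ℝ) 1 := Icc_subset_Icc_right hr1
  obtain ⟨η, hη, hmargin⟩ :=
    isCompact_Icc.exists_forall_le' (f := fun t => min (x t - a t) (b t - x t))
    (((hx.sub ha).inf (hb.sub hx)).mono hK) (a := (0 : ℝ)) fun t ht => by
      have := mem_barriers_of_lt_exitTime (hK ht) (ht.2.trans_lt hrτ)
      exact lt_min (by linarith) (by linarith)
  filter_upwards [Metric.tendstoUniformlyOn_iff.1 hU η hη] with n hn
  refine hsr.trans_le (le_exitTime hr1 fun t ht => ?_)
  have hdist := hn t (hK ht)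
  have hmt := hmargin t ht
  rw [Real.dist_eq, abs_lt] at hdist
  simp only [le_min_iff] at hmt
  constructor <;> linarith

theorem exists_lt_of_sInf_union_one_eq {P : ℝ → Prop} {τ s : ℝ} (hτ : τ < 1)
    (h : sInf ({t | τ < t ∧ t ≤ 1 ∧ P t} ∪ {1}) = τ) (hs : τ < s) :
    ∃ t, τ < t ∧ t ≤ 1 ∧ P t ∧ t < s := by
  have hne : ({t | τ < t ∧ t ≤ 1 ∧ P t} ∪ {1} : Set ℝ).Nonempty :=
    ⟨1, mem_union_right _ rfl⟩
  obtain ⟨t, ht, hts⟩ := exists_lt_of_csInf_lt hne (h.trans_lt (lt_min hs hτ))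
  rcases ht with ⟨hτt, ht1, hPt⟩ | rfl
  · exact ⟨t, hτt, ht1, hPt, hts.trans_le (min_le_left _ _)⟩
  · exact absurd hts (min_le_right _ _).not_gt

theorem eventually_exitTime_lt {ι : Type*} {l : Filter ι} {xn : ι → ℝ → ℝ}
    (hx : MemC1 a b x ∨ MemC2 a b x ∨ MemC3 a b x)
    (hU : ∀ t ∈ Icc (0 : ℝ) 1, Tendsto (fun n => xn n t) l (nhds (x t))) {s : ℝ}
    (hs : exitTime a b x < s) : ∀ᶠ n in l, exitTime a b (xn n) < s := by
  have hτ0 := (exitTime_mem a b x).1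
  rcases hx with hx | hx | hx
  · obtain ⟨t, hτt, ht1, hbx, hts⟩ := exists_lt_of_sInf_union_one_eq hx.2.1 hx.2.2.2 hs
    have ht : t ∈ Icc (0 : ℝ) 1 := ⟨hτ0.trans hτt.le, ht1⟩
    filter_upwards [(hU t ht).eventually (lt_mem_nhds hbx)] with n hn
    exact (exitTime_le ht (Or.inr hn.le)).trans_lt hts
  · obtain ⟨t, hτt, ht1, hxa, hts⟩ := exists_lt_of_sInf_union_one_eq hx.2.1 hx.2.2.2 hs
    have ht : t ∈ Icc (0 : ℝ) 1 := ⟨hτ0.trans hτt.le, ht1⟩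
    filter_upwards [(hU t ht).eventually (gt_mem_nhds hxa)] with n hn
    exact (exitTime_le ht (Or.inl hn.le)).trans_lt hts
  · exact .of_forall fun n => (exitTime_mem a b (xn n)).2.trans_lt (hx.2 ▸ hs)

theorem tendsto_exitTime {ι : Type*} {l : Filter ι} {xn : ι → ℝ → ℝ}
    (ha : ContinuousOn a (Icc 0 1)) (hb : ContinuousOn b (Icc 0 1))
    (hx : MemC1 a b x ∨ MemC2 a b x ∨ MemC3 a b x) (hxc : ContinuousOn x (Icc 0 1))
    (hU : TendstoUniformlyOn xn x l (Icc 0 1)) :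
    Tendsto (fun n => exitTime a b (xn n)) l (nhds (exitTime a b x)) :=
  tendsto_order.2 ⟨fun _ hs => eventually_lt_exitTime ha hb hxc hU hs,
    fun _ hs => eventually_exitTime_lt hx (fun _ ht => hU.tendsto_at ht) hs⟩

end exitTime

theorem G_tendsto_general (m : ℕ) (ν1 ν2 ν3 ν4 : Fin m → ℝ)
    (hν : ∀ i, ν1 i ∈ Set.Icc (0:ℝ) 1 ∧ ν2 i ∈ Set.Icc (0:ℝ) 1 ∧
      ν3 i ∈ Set.Icc (0:ℝ) 1 ∧ ν4 i ∈ Set.Icc (0:ℝ) 1)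
    (a b : ℝ → ℝ)
    (ha : ContinuousOn a (Set.Icc 0 1)) (hb : ContinuousOn b (Set.Icc 0 1))
    (g : (Fin m → ℝ) × (Fin m → ℝ) × (Fin m → ℝ) × (Fin m → ℝ) × ℝ → ℝ)
    (x : ℝ → ℝ) (hx : MemC1 a b x ∨ MemC2 a b x ∨ MemC3 a b x)
    (hg : ContinuousAt g (argZ m a b ν1 ν2 ν3 ν4 x))
    (xn : ℕ → ℝ → ℝ) (hxn : ∀ n, RCLL (xn n))
    (hconv : SkorohodTendsto xn x) :
    Filter.Tendsto (fun n => g (argZ m a b ν1 ν2 ν3 ν4 (xn n))) Filter.atTop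
      (nhds (g (argZ m a b ν1 ν2 ν3 ν4 x))) := by
  have hxc : ContinuousOn x (Icc 0 1) := by rcases hx with h | h | h <;> exact h.1
  have hU := hconv.tendstoUniformlyOn hxc fun n => (hxn n).isBounded_image
  have hUmax := hU.runMax (isCompact_Icc.bddAbove_image hxc)
  have hτ := tendsto_exitTime ha hb hx hxc hU
  have hτI := exitTime_mem a b x
  have scaled : ∀ ν : Fin m → ℝ, (∀ i, ν i ∈ Icc (0 : ℝ) 1) → ∀ i,
      Tendsto (fun n => exitTime a b (xn n) * ν i) atTop
        (nhdsWithin (exitTime a b x * ν i) (Icc 0 1)) := fun ν hν i =>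
    tendsto_nhdsWithin_iff.2 ⟨hτ.mul_const _,
      .of_forall fun n => unitInterval.mul_mem (exitTime_mem a b (xn n)) (hν i)⟩
  exact hg.tendsto.comp <|
    (tendsto_proj hU hxc (fun i => unitInterval.mul_mem hτI (hν i).1)
      (scaled ν1 fun i => (hν i).1)).prodMk_nhds <|
    (tendsto_proj hU hxc (fun i => (hν i).2.1)
      fun i => tendsto_const_nhdsWithin (hν i).2.1).prodMk_nhds <|
    (tendsto_proj hUmax hxc.runMax (fun i => unitInterval.mul_mem hτI (hν i).2.2.1)
      (scaled ν3 fun i => (hν i).2.2.1)).prodMk_nhds <|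
    (tendsto_proj hUmax hxc.runMax (fun i => (hν i).2.2.2)
      fun i => tendsto_const_nhdsWithin (hν i).2.2.2).prodMk_nhds hτ

/-- Continuity of
`G(x) = g( Π(x, π(x)ν¹), Π(x, ν²), Π(x*, π(x)ν³), Π(x*, ν⁴), π(x) )`
at every `x ∈ C_1 ∪ C_2 ∪ C_3` at which `g` is continuous at the point
`Z(x)`: if `x_n → x` in the Skorohod topology, then `G(x_n) → G(x)`. -/
theorem G_tendsto (m : ℕ) (ν1 ν2 ν3 ν4 : Fin m → ℝ)
    (hν : ∀ i, ν1 i ∈ Set.Icc (0:ℝ) 1 ∧ ν2 i ∈ Set.Icc (0:ℝ) 1 ∧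
      ν3 i ∈ Set.Icc (0:ℝ) 1 ∧ ν4 i ∈ Set.Icc (0:ℝ) 1)
    (a b : ℝ → ℝ)
    (ha : ContinuousOn a (Set.Icc 0 1)) (hb : ContinuousOn b (Set.Icc 0 1))
    (hab : ∀ t ∈ Set.Icc (0:ℝ) 1, a t < b t)
    (g : (Fin m → ℝ) × (Fin m → ℝ) × (Fin m → ℝ) × (Fin m → ℝ) × ℝ → ℝ)
    (x : ℝ → ℝ) (hx : MemC1 a b x ∨ MemC2 a b x ∨ MemC3 a b x)
    (hg : ContinuousAt g (argZ m a b ν1 ν2 ν3 ν4 x))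
    (xn : ℕ → ℝ → ℝ) (hxn : ∀ n, RCLL (xn n))
    (hconv : SkorohodTendsto xn x) :
    Filter.Tendsto (fun n => g (argZ m a b ν1 ν2 ν3 ν4 (xn n))) Filter.atTop
      (nhds (g (argZ m a b ν1 ν2 ν3 ν4 x))) :=
  G_tendsto_general m ν1 ν2 ν3 ν4 hν a b ha hb g x hx hg xn hxn hconv
end
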